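/- arXiv:2407.12311 — 3 statements merged into one kernel-verified Lean document; each statement's English description precedes it below -/
import Mathlib

section
/- For every u ∈ X_JK one has the discrete Gagliardo–Nirenberg-type inequality ‖u‖⁸_{8,h} ≤ 2 · ‖u‖⁶_{6,h} · ‖δ⁺u‖²_{2,h}. -/
noncomputable section

open Finset Complex ComplexConjugate

/-- Membership in the space `X_JK`: complex arrays vanishing on the boundary of the grid. -/
def memX (J K : ℕ) (u : ℕ → ℕ → ℂ) : Prop :=
  (∀ k, u 0 k = 0) ∧ (∀ k, u J k = 0) ∧ (∀ j, u j 0 = 0) ∧ (∀ j, u j K = 0)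

/-- `normP Δx Δy J K p u = ‖u‖_{p,h}^p`. -/
def normP (Δx Δy : ℝ) (J K : ℕ) (p : ℕ) (u : ℕ → ℕ → ℂ) : ℝ :=
  Δx * Δy * ∑ j ∈ range J, ∑ k ∈ range K, ‖u j k‖ ^ p

/-- `gradSq Δx Δy J K u = ‖δ⁺u‖²_{2,h}`. -/
def gradSq (Δx Δy : ℝ) (J K : ℕ) (u : ℕ → ℕ → ℂ) : ℝ :=
  Δx * Δy * ∑ j ∈ range J, ∑ k ∈ range K,
    (‖(u (j + 1) k - u j k) / (Δx : ℂ)‖ ^ 2 +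
      ‖(u j (k + 1) - u j k) / (Δy : ℂ)‖ ^ 2)

/-- The discrete energy `E_h(u)`. -/
def energy (Δx Δy : ℝ) (J K : ℕ) (lam ν : ℝ) (u : ℕ → ℕ → ℂ) : ℝ :=
  gradSq Δx Δy J K u - lam / 2 * normP Δx Δy J K 4 u + ν / 3 * normP Δx Δy J K 6 u

/-- The discrete Laplacian `δ² = δ²_x + δ²_y` (at interior indices). -/
def delta2 (Δx Δy : ℝ) (u : ℕ → ℕ → ℂ) (j k : ℕ) : ℂ :=
  (u (j + 1) k - 2 * u j k + u (j - 1) k) / (Δx : ℂ) ^ 2 +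
    (u j (k + 1) - 2 * u j k + u j (k - 1)) / (Δy : ℂ) ^ 2

/-- `ψ₁(z,w) = ((|z|² + |w|²)/2)·((z+w)/2)`. -/
def psi1 (z w : ℂ) : ℂ :=
  (((‖z‖ ^ 2 + ‖w‖ ^ 2) / 2 : ℝ) : ℂ) * ((z + w) / 2)

/-- `ψ₂(z,w) = ((|z|⁴ + |z|²|w|² + |w|⁴)/3)·((z+w)/2)`. -/
def psi2 (z w : ℂ) : ℂ :=
  (((‖z‖ ^ 4 + ‖z‖ ^ 2 * ‖w‖ ^ 2 + ‖w‖ ^ 4) / 3 : ℝ) : ℂ) *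
    ((z + w) / 2)

/-- `φ(z,w) = |(z+w)/2|²·((z+w)/2)`. -/
def phi (z w : ℂ) : ℂ :=
  ((‖(z + w) / 2‖ ^ 2 : ℝ) : ℂ) * ((z + w) / 2)

/-- One Crank–Nicolson step equation: `W` is the next level, `V` the current one. -/
def stepEq (Δx Δy : ℝ) (J K : ℕ) (lam ν ε τ : ℝ) (W V : ℕ → ℕ → ℂ) : Prop :=
  ∀ j k : ℕ, 1 ≤ j → j ≤ J - 1 → 1 ≤ k → k ≤ K - 1 →
    Complex.I * (W j k - V j k) / (τ : ℂ) +
      delta2 Δx Δy (fun j' k' => (W j' k' + V j' k') / 2) j k +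
      (lam : ℂ) * psi1 (W j k) (V j k) - (ν : ℂ) * psi2 (W j k) (V j k) +
      Complex.I * (ε : ℂ) * phi (W j k) (V j k) = 0

/-- A CNFD solution `U⁰, …, U^N`. -/
def isCNFD (Δx Δy : ℝ) (J K : ℕ) (lam ν ε τ : ℝ) (N : ℕ) (U : ℕ → ℕ → ℕ → ℂ) : Prop :=
  (∀ n, n ≤ N → memX J K (U n)) ∧
    ∀ n, n < N → stepEq Δx Δy J K lam ν ε τ (U (n + 1)) (U n)

/-! Telescoping `|u_{j,k}|⁴` from both ends of the row `k` gives
`2 |u_{j,k}|⁴ ≤ Σ_i ||u_{i+1,k}|⁴ - |u_{i,k}|⁴| ≤ 2 Σ_i (|u_{i+1,k}|³ + |u_{i,k}|³) |u_{i+1,k} - u_{i,k}|`,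
and likewise along the column `j`. Multiplying the two one-dimensional bounds and summing over the
grid gives `Σ |u|⁸ ≤ S_x S_y` (Ladyzhenskaya's trick). Cauchy–Schwarz and the boundary conditions
give `S_x² ≤ 4 Σ |u|⁶ · E_x` with `E_x = Σ |u_{j+1,k} - u_{j,k}|²`, and similarly for `S_y`; finally
AM–GM with weight `Δy / Δx` splits `√(E_x E_y)` into the two mesh-scaled parts of `‖δ⁺u‖²`. -/

lemma abs_pow_four_sub_pow_four_le {A B : ℝ} (hA : 0 ≤ A) (hB : 0 ≤ B) :
    |A ^ 4 - B ^ 4| ≤ 2 * (A ^ 3 + B ^ 3) * |A - B| := by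
  have hfactor : A ^ 4 - B ^ 4 = (A - B) * ((A + B) * (A ^ 2 + B ^ 2)) := by ring
  have hle : (A + B) * (A ^ 2 + B ^ 2) ≤ 2 * (A ^ 3 + B ^ 3) := by
    nlinarith [mul_nonneg (sq_nonneg (A - B)) (add_nonneg hA hB)]
  rw [hfactor, abs_mul, abs_of_nonneg (by positivity : 0 ≤ (A + B) * (A ^ 2 + B ^ 2)), mul_comm]
  exact mul_le_mul_of_nonneg_right hle (abs_nonneg _)

lemma abs_norm_pow_four_sub_le {E : Type*} [SeminormedAddCommGroup E] (z w : E) :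
    |‖z‖ ^ 4 - ‖w‖ ^ 4| ≤ 2 * (‖z‖ ^ 3 + ‖w‖ ^ 3) * ‖z - w‖ :=
  (abs_pow_four_sub_pow_four_le (norm_nonneg z) (norm_nonneg w)).trans <|
    mul_le_mul_of_nonneg_left (abs_norm_sub_norm_le z w) (by positivity)

lemma two_mul_le_sum_abs_sub_of_eq_zero {g : ℕ → ℝ} {n j : ℕ} (h0 : g 0 = 0) (hn : g n = 0)
    (hj : j ≤ n) : 2 * g j ≤ ∑ i ∈ range n, |g (i + 1) - g i| := by
  have hleft : g j = ∑ i ∈ range j, (g (i + 1) - g i) := by rw [sum_range_sub, h0, sub_zero]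
  have hright : -g j = ∑ i ∈ Ico j n, (g (i + 1) - g i) := by rw [sum_Ico_sub g hj, hn, zero_sub]
  calc 2 * g j
      ≤ |∑ i ∈ range j, (g (i + 1) - g i)| + |∑ i ∈ Ico j n, (g (i + 1) - g i)| := by
        rw [← hleft, ← hright, abs_neg]
        linarith [le_abs_self (g j)]
    _ ≤ ∑ i ∈ range j, |g (i + 1) - g i| + ∑ i ∈ Ico j n, |g (i + 1) - g i| :=
      add_le_add (abs_sum_le_sum_abs _ _) (abs_sum_le_sum_abs _ _)
    _ = ∑ i ∈ range n, |g (i + 1) - g i| := sum_range_add_sum_Ico _ hj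

lemma norm_pow_four_le_of_eq_zero {E : Type*} [SeminormedAddCommGroup E] {f : ℕ → E} {n j : ℕ}
    (h0 : f 0 = 0) (hn : f n = 0) (hj : j ≤ n) :
    ‖f j‖ ^ 4 ≤ ∑ i ∈ range n, (‖f (i + 1)‖ ^ 3 + ‖f i‖ ^ 3) * ‖f (i + 1) - f i‖ := by
  have htele := two_mul_le_sum_abs_sub_of_eq_zero (g := fun i => ‖f i‖ ^ 4)
    (by simp [h0]) (by simp [hn]) hj
  have hsteps : ∑ i ∈ range n, |‖f (i + 1)‖ ^ 4 - ‖f i‖ ^ 4| ≤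
      2 * ∑ i ∈ range n, (‖f (i + 1)‖ ^ 3 + ‖f i‖ ^ 3) * ‖f (i + 1) - f i‖ := by
    rw [mul_sum]
    exact sum_le_sum fun i _ => (abs_norm_pow_four_sub_le _ _).trans_eq (mul_assoc _ _ _)
  linarith

lemma sum_sum_mul_self_le_of_le {ι κ : Type*} {s : Finset ι} {t : Finset κ} {F : ι → κ → ℝ}
    {f : κ → ℝ} {g : ι → ℝ}
    (hF : ∀ j ∈ s, ∀ k ∈ t, 0 ≤ F j k) (hf : ∀ j ∈ s, ∀ k ∈ t, F j k ≤ f k)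
    (hg : ∀ j ∈ s, ∀ k ∈ t, F j k ≤ g j) :
    ∑ j ∈ s, ∑ k ∈ t, F j k * F j k ≤ (∑ k ∈ t, f k) * ∑ j ∈ s, g j := by
  rw [mul_comm, sum_mul_sum]
  exact sum_le_sum fun j hj => sum_le_sum fun k hk =>
    mul_le_mul (hg j hj k hk) (hf j hj k hk) (hF j hj k hk) ((hF j hj k hk).trans (hg j hj k hk))

lemma sq_sum_add_mul_le {ι : Type*} (s : Finset ι) (a b d : ι → ℝ) :
    (∑ i ∈ s, (a i + b i) * d i) ^ 2 ≤
      2 * (∑ i ∈ s, a i ^ 2 + ∑ i ∈ s, b i ^ 2) * ∑ i ∈ s, d i ^ 2 := by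
  refine (sum_mul_sq_le_sq_mul_sq s _ d).trans (mul_le_mul_of_nonneg_right ?_ (by positivity))
  rw [mul_add, mul_sum, mul_sum, ← sum_add_distrib]
  exact sum_le_sum fun i _ => by nlinarith [sq_nonneg (a i - b i)]

lemma sum_range_succ_eq_sum_range_of_eq {M : Type*} [AddCancelCommMonoid M] {g : ℕ → M} {n : ℕ}
    (h : g 0 = g n) : ∑ i ∈ range n, g (i + 1) = ∑ i ∈ range n, g i := by
  have := (sum_range_succ' g n).symm.trans (sum_range_succ g n)
  rw [h] at this
  exact add_right_cancel this

section Grid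

variable {E : Type*} [SeminormedAddCommGroup E]

/- `cubicVar` and `diffSq` take differences in the first index; the second direction is handled
by applying them to `Function.swap u`. -/
def cubicVar (J K : ℕ) (u : ℕ → ℕ → E) : ℝ :=
  ∑ j ∈ range J, ∑ k ∈ range K, (‖u (j + 1) k‖ ^ 3 + ‖u j k‖ ^ 3) * ‖u (j + 1) k - u j k‖

def diffSq (J K : ℕ) (u : ℕ → ℕ → E) : ℝ :=
  ∑ j ∈ range J, ∑ k ∈ range K, ‖u (j + 1) k - u j k‖ ^ 2

lemma sq_cubicVar_le {J K : ℕ} {u : ℕ → ℕ → E} (hleft : ∀ k, u 0 k = 0)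
    (hright : ∀ k, u J k = 0) :
    cubicVar J K u ^ 2 ≤ 4 * (∑ j ∈ range J, ∑ k ∈ range K, ‖u j k‖ ^ 6) * diffSq J K u := by
  have hshift : ∑ j ∈ range J, ∑ k ∈ range K, ‖u (j + 1) k‖ ^ 6 =
      ∑ j ∈ range J, ∑ k ∈ range K, ‖u j k‖ ^ 6 := by
    calc ∑ j ∈ range J, ∑ k ∈ range K, ‖u (j + 1) k‖ ^ 6
        = ∑ k ∈ range K, ∑ j ∈ range J, ‖u (j + 1) k‖ ^ 6 := sum_comm
      _ = ∑ k ∈ range K, ∑ j ∈ range J, ‖u j k‖ ^ 6 := sum_congr rfl fun k _ =>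
          sum_range_succ_eq_sum_range_of_eq (g := fun j => ‖u j k‖ ^ 6) (by simp [hleft, hright])
      _ = ∑ j ∈ range J, ∑ k ∈ range K, ‖u j k‖ ^ 6 := sum_comm
  have hcs := sq_sum_add_mul_le (range J ×ˢ range K) (fun p => ‖u (p.1 + 1) p.2‖ ^ 3)
    (fun p => ‖u p.1 p.2‖ ^ 3) (fun p => ‖u (p.1 + 1) p.2 - u p.1 p.2‖)
  simp only [sum_product, ← pow_mul] at hcs
  rw [hshift] at hcs
  unfold cubicVar diffSq
  linarith

lemma sum_norm_pow_eight_le {J K : ℕ} {u : ℕ → ℕ → E} (hleft : ∀ k, u 0 k = 0)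
    (hright : ∀ k, u J k = 0) (hbot : ∀ j, u j 0 = 0) (htop : ∀ j, u j K = 0) :
    ∑ j ∈ range J, ∑ k ∈ range K, ‖u j k‖ ^ 8 ≤
      cubicVar J K u * cubicVar K J (Function.swap u) := by
  have hprod := sum_sum_mul_self_le_of_le (s := range J) (t := range K)
    (F := fun j k => ‖u j k‖ ^ 4) (fun _ _ _ _ => by positivity)
    (fun j hj k _ => norm_pow_four_le_of_eq_zero (f := fun i => u i k) (hleft k) (hright k)
      (mem_range.mp hj).le)
    (fun j _ k hk => norm_pow_four_le_of_eq_zero (f := u j) (hbot j) (htop j)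
      (mem_range.mp hk).le)
  convert hprod using 2
  · exact sum_congr rfl fun k _ => by ring
  · exact sum_comm
  · exact sum_comm

end Grid

lemma mul_le_two_mul_add_of_sq_le {x y V e f s : ℝ} (hV : 0 ≤ V)
    (he : 0 ≤ e) (hf : 0 ≤ f) (hs : 0 < s) (hxe : x ^ 2 ≤ 4 * V * e) (hyf : y ^ 2 ≤ 4 * V * f) :
    x * y ≤ 2 * V * (s * e + f / s) := by
  have hamgm : 4 * e * f ≤ (s * e + f / s) ^ 2 := by
    have : (s * e + f / s) ^ 2 - 4 * e * f = (s * e - f / s) ^ 2 := by field_simp; ring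
    linarith [sq_nonneg (s * e - f / s)]
  refine le_of_pow_le_pow_left₀ two_ne_zero (by positivity) ?_
  calc (x * y) ^ 2 = x ^ 2 * y ^ 2 := mul_pow x y 2
    _ ≤ (4 * V * e) * (4 * V * f) := mul_le_mul hxe hyf (sq_nonneg y) (by positivity)
    _ = 4 * V ^ 2 * (4 * e * f) := by ring
    _ ≤ 4 * V ^ 2 * (s * e + f / s) ^ 2 := by gcongr
    _ = (2 * V * (s * e + f / s)) ^ 2 := by ring

lemma area_mul_le_of_le_mul_of_sq_le {Δx Δy N x y V e f : ℝ} (hN : 0 ≤ N) (hV : 0 ≤ V)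
    (he : 0 ≤ e) (hf : 0 ≤ f) (hNxy : N ≤ x * y) (hxe : x ^ 2 ≤ 4 * V * e)
    (hyf : y ^ 2 ≤ 4 * V * f) :
    Δx * Δy * N ≤ 2 * (Δx * Δy * V) * (Δx * Δy * (e / Δx ^ 2 + f / Δy ^ 2)) := by
  rcases le_or_gt (Δx * Δy) 0 with hp | hp
  · have hrhs : 0 ≤ 2 * (Δx * Δy * V) * (Δx * Δy * (e / Δx ^ 2 + f / Δy ^ 2)) := by
      have : 0 ≤ 2 * V * (e / Δx ^ 2 + f / Δy ^ 2) := by positivity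
      nlinarith [mul_nonneg (mul_self_nonneg (Δx * Δy)) this]
    nlinarith
  · have hx : Δx ≠ 0 := left_ne_zero_of_mul hp.ne'
    have hy : Δy ≠ 0 := right_ne_zero_of_mul hp.ne'
    have hs : 0 < Δy / Δx := by
      rw [← mul_div_mul_left Δy Δx hx, ← sq]; exact div_pos hp (by positivity)
    calc Δx * Δy * N ≤ Δx * Δy * (2 * V * (Δy / Δx * e + f / (Δy / Δx))) :=
          mul_le_mul_of_nonneg_left
            (hNxy.trans (mul_le_two_mul_add_of_sq_le hV he hf hs hxe hyf)) hp.le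
      _ = 2 * (Δx * Δy * V) * (Δx * Δy * (e / Δx ^ 2 + f / Δy ^ 2)) := by
          field_simp

lemma gradSq_eq (Δx Δy : ℝ) (J K : ℕ) (u : ℕ → ℕ → ℂ) :
    gradSq Δx Δy J K u =
      Δx * Δy * (diffSq J K u / Δx ^ 2 + diffSq K J (Function.swap u) / Δy ^ 2) := by
  have hswap : diffSq K J (Function.swap u) =
      ∑ j ∈ range J, ∑ k ∈ range K, ‖u j (k + 1) - u j k‖ ^ 2 := sum_comm
  rw [gradSq, diffSq, hswap, sum_div, sum_div, ← sum_add_distrib]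
  congr 1
  refine sum_congr rfl fun j _ => ?_
  rw [sum_div, sum_div, ← sum_add_distrib]
  simp only [norm_div, Complex.norm_real, Real.norm_eq_abs, div_pow, sq_abs]

theorem stmt2_general (J K : ℕ) (Δx Δy : ℝ) (u : ℕ → ℕ → ℂ) (hu : memX J K u) :
    normP Δx Δy J K 8 u ≤ 2 * normP Δx Δy J K 6 u * gradSq Δx Δy J K u := by
  obtain ⟨hleft, hright, hbot, htop⟩ := hu
  have hx := sq_cubicVar_le (K := K) hleft hright
  have hy := sq_cubicVar_le (K := J) (u := Function.swap u) hbot htop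
  rw [show ∑ j ∈ range K, ∑ k ∈ range J, ‖Function.swap u j k‖ ^ 6 =
    ∑ j ∈ range J, ∑ k ∈ range K, ‖u j k‖ ^ 6 from sum_comm] at hy
  rw [normP, normP, gradSq_eq]
  exact area_mul_le_of_le_mul_of_sq_le (by positivity) (by positivity)
    (by unfold diffSq; positivity) (by unfold diffSq; positivity)
    (sum_norm_pow_eight_le hleft hright hbot htop) hx hy

/-- For `u ∈ X_JK`, `‖u‖⁸_{8,h} ≤ 2·‖u‖⁶_{6,h}·‖δ⁺u‖²_{2,h}`. -/
theorem stmt2 (J K : ℕ) (hJ : 2 ≤ J) (hK : 2 ≤ K) (a b c d : ℝ) (hab : a < b) (hcd : c < d)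
    (Δx Δy : ℝ) (hΔx : Δx = (b - a) / J) (hΔy : Δy = (d - c) / K)
    (u : ℕ → ℕ → ℂ) (hu : memX J K u) :
    normP Δx Δy J K 8 u ≤ 2 * normP Δx Δy J K 6 u * gradSq Δx Δy J K u :=
  stmt2_general J K Δx Δy u hu
end
end

section
/- Let {Uⁿ}_{n=0}^N be a CNFD solution. Then the discrete solution is bounded in the discrete L²-norm: ‖Uⁿ‖²_{2,h} ≤ ‖U⁰‖²_{2,h} for every n = 1, …, N. -/
/-!
Pair the step equation with the conjugate of the midpoint `M = U^{n+1/2}`, sum over the grid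
and take imaginary parts. The time difference contributes `(‖U^{n+1}‖² - ‖Uⁿ‖²) / (2τ)`; summation
by parts makes `Σ δ²M · conj M` real, and `ψ₁`, `ψ₂` are real multiples of `M`, so these terms
drop out; the damping term contributes `ε ‖M‖⁴_4 ≥ 0`. Hence
`‖U^{n+1}‖² + 2τε ‖U^{n+1/2}‖⁴_4 = ‖Uⁿ‖²`, and the discrete mass is nonincreasing.
-/

noncomputable section

open Finset Complex ComplexConjugate

theorem sum_range_succ_eq_sum_range {M : Type*} [AddCommMonoid M] (g : ℕ → M) (J : ℕ)
    (h0 : g 0 = 0) (hJ : g J = 0) :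
    ∑ j ∈ range J, g (j + 1) = ∑ j ∈ range J, g j := by
  have h := (sum_range_succ' g J).symm.trans (sum_range_succ g J)
  rwa [h0, hJ, add_zero, add_zero] at h

theorem sum_secondDiff_mul_conj (f : ℕ → ℂ) (J : ℕ) (h0 : f 0 = 0) (hJ : f J = 0) :
    ∑ j ∈ range J, (f (j + 1) - 2 * f j + f (j - 1)) * conj (f j) =
      -∑ j ∈ range J, ((‖f (j + 1) - f j‖ ^ 2 : ℝ) : ℂ) := by
  set g : ℕ → ℂ := fun j => (f j - f (j - 1)) * conj (f j)
  have hshift : ∑ j ∈ range J, g j = ∑ j ∈ range J, (f (j + 1) - f j) * conj (f (j + 1)) := by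
    rw [← sum_range_succ_eq_sum_range g J (by simp [g, h0]) (by simp [g, hJ])]
    simp [g]
  calc ∑ j ∈ range J, (f (j + 1) - 2 * f j + f (j - 1)) * conj (f j)
      = ∑ j ∈ range J, ((f (j + 1) - f j) * conj (f j) - g j) := by
        refine sum_congr rfl fun j _ => ?_
        ring
    _ = -∑ j ∈ range J, (f (j + 1) - f j) * conj (f (j + 1) - f j) := by
        rw [sum_sub_distrib, hshift, ← sum_neg_distrib, ← sum_sub_distrib]
        refine sum_congr rfl fun j _ => ?_
        rw [map_sub]
        ring
    _ = -∑ j ∈ range J, ((‖f (j + 1) - f j‖ ^ 2 : ℝ) : ℂ) := by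
        simp only [mul_conj', ofReal_pow]

theorem sum_delta2_mul_conj (Δx Δy : ℝ) (J K : ℕ) (u : ℕ → ℕ → ℂ) (hu : memX J K u) :
    ∑ j ∈ range J, ∑ k ∈ range K, delta2 Δx Δy u j k * conj (u j k) =
      -((∑ j ∈ range J, ∑ k ∈ range K,
        (‖(u (j + 1) k - u j k) / (Δx : ℂ)‖ ^ 2 + ‖(u j (k + 1) - u j k) / (Δy : ℂ)‖ ^ 2) : ℝ) : ℂ) := by
  obtain ⟨hx0, hxJ, hy0, hyK⟩ := hu
  calc ∑ j ∈ range J, ∑ k ∈ range K, delta2 Δx Δy u j k * conj (u j k)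
      = (∑ k ∈ range K, ∑ j ∈ range J,
            (u (j + 1) k - 2 * u j k + u (j - 1) k) * conj (u j k)) / (Δx : ℂ) ^ 2 +
          (∑ j ∈ range J, ∑ k ∈ range K,
            (u j (k + 1) - 2 * u j k + u j (k - 1)) * conj (u j k)) / (Δy : ℂ) ^ 2 := by
        rw [sum_comm (s := range K), sum_div, sum_div, ← sum_add_distrib]
        refine sum_congr rfl fun j _ => ?_
        rw [sum_div, sum_div, ← sum_add_distrib]
        refine sum_congr rfl fun k _ => ?_
        rw [delta2]
        ring
    _ = (∑ k ∈ range K, -∑ j ∈ range J, ((‖u (j + 1) k - u j k‖ ^ 2 : ℝ) : ℂ)) / (Δx : ℂ) ^ 2 +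
          (∑ j ∈ range J, -∑ k ∈ range K, ((‖u j (k + 1) - u j k‖ ^ 2 : ℝ) : ℂ)) / (Δy : ℂ) ^ 2 := by
        congr 2
        · exact sum_congr rfl fun k _ => sum_secondDiff_mul_conj (u · k) J (hx0 k) (hxJ k)
        · exact sum_congr rfl fun j _ => sum_secondDiff_mul_conj (u j) K (hy0 j) (hyK j)
    _ = _ := by
        simp only [sum_neg_distrib]
        rw [sum_comm (s := range K)]
        simp only [norm_div, div_pow, norm_real, Real.norm_eq_abs, sq_abs, sum_add_distrib]
        push_cast
        simp only [← sum_div]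
        ring

theorem ofReal_mul_mul_conj (r : ℝ) (m : ℂ) : (r : ℂ) * m * conj m = ((r * ‖m‖ ^ 2 : ℝ) : ℂ) := by
  rw [mul_assoc, mul_conj']
  push_cast
  ring

theorem im_I_mul_sub_div_mul_conj {τ : ℝ} (hτ : τ ≠ 0) (z w : ℂ) :
    (I * (z - w) / τ * conj ((z + w) / 2)).im = (‖z‖ ^ 2 - ‖w‖ ^ 2) / (2 * τ) := by
  simp only [Complex.sq_norm, normSq_apply, div_ofReal_re, div_ofReal_im, mul_im, mul_re, I_re,
    I_im, sub_re, sub_im, conj_re, conj_im, add_re, add_im, div_ofNat_re, div_ofNat_im]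
  field_simp
  ring

theorem im_step_mul_conj (lam ν ε : ℝ) {τ : ℝ} (hτ : τ ≠ 0) (z w : ℂ) :
    ((I * (z - w) / τ + lam * psi1 z w - ν * psi2 z w + I * ε * phi z w) *
        conj ((z + w) / 2)).im =
      (‖z‖ ^ 2 - ‖w‖ ^ 2) / (2 * τ) + ε * ‖(z + w) / 2‖ ^ 4 := by
  have h₁ : psi1 z w * conj ((z + w) / 2) = _ := ofReal_mul_mul_conj _ _
  have h₂ : psi2 z w * conj ((z + w) / 2) = _ := ofReal_mul_mul_conj _ _
  have hφ : phi z w * conj ((z + w) / 2) = _ := ofReal_mul_mul_conj _ _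
  simp only [add_mul, sub_mul, mul_assoc _ (psi1 z w), mul_assoc _ (psi2 z w),
    mul_assoc _ (phi z w), h₁, h₂, hφ, add_im, sub_im, im_I_mul_sub_div_mul_conj hτ,
    mul_im, I_re, I_im, ofReal_re, ofReal_im]
  ring

theorem memX_midpoint {J K : ℕ} {W V : ℕ → ℕ → ℂ} (hW : memX J K W) (hV : memX J K V) :
    memX J K (fun j k => (W j k + V j k) / 2) := by
  obtain ⟨hW₁, hW₂, hW₃, hW₄⟩ := hW
  obtain ⟨hV₁, hV₂, hV₃, hV₄⟩ := hV
  refine ⟨fun k => ?_, fun k => ?_, fun j => ?_, fun j => ?_⟩ <;> simp [*]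

theorem normP_two_add_of_stepEq (Δx Δy : ℝ) (J K : ℕ) (lam ν ε : ℝ) {τ : ℝ} (hτ : τ ≠ 0)
    {W V : ℕ → ℕ → ℂ} (hW : memX J K W) (hV : memX J K V)
    (h : stepEq Δx Δy J K lam ν ε τ W V) :
    normP Δx Δy J K 2 W + 2 * τ * ε * normP Δx Δy J K 4 (fun j k => (W j k + V j k) / 2) =
      normP Δx Δy J K 2 V := by
  set M : ℕ → ℕ → ℂ := fun j k => (W j k + V j k) / 2 with hM_def
  have hM : memX J K M := memX_midpoint hW hV
  have hsum : ∑ j ∈ range J, ∑ k ∈ range K,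
      ((I * (W j k - V j k) / τ + lam * psi1 (W j k) (V j k) - ν * psi2 (W j k) (V j k) +
          I * ε * phi (W j k) (V j k)) * conj (M j k) + delta2 Δx Δy M j k * conj (M j k)) = 0 := by
    refine sum_eq_zero fun j hj => sum_eq_zero fun k hk => ?_
    rw [mem_range] at hj hk
    rcases Nat.eq_zero_or_pos j with rfl | hj₀
    · simp [hM.1 k]
    rcases Nat.eq_zero_or_pos k with rfl | hk₀
    · simp [hM.2.2.1 j]
    have hjk := h j k hj₀ (by omega) hk₀ (by omega)
    rw [← hM_def] at hjk
    linear_combination conj (M j k) * hjk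
  simp only [sum_add_distrib] at hsum
  rw [sum_delta2_mul_conj Δx Δy J K M hM] at hsum
  have him := congrArg im hsum
  simp only [add_im, neg_im, ofReal_im, neg_zero, add_zero, zero_im, im_sum, hM_def,
    im_step_mul_conj lam ν ε hτ, sum_add_distrib, ← sum_div, sum_sub_distrib, ← mul_sum] at him
  have key : ∑ j ∈ range J, ∑ k ∈ range K, ‖W j k‖ ^ 2 +
      2 * τ * ε * ∑ j ∈ range J, ∑ k ∈ range K, ‖M j k‖ ^ 4 =
        ∑ j ∈ range J, ∑ k ∈ range K, ‖V j k‖ ^ 2 := by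
    field_simp at him
    linear_combination him
  simp only [normP]
  linear_combination (Δx * Δy) * key

theorem normP_two_le_of_stepEq {Δx Δy : ℝ} (hΔ : 0 ≤ Δx * Δy) (J K : ℕ) (lam ν : ℝ) {ε τ : ℝ}
    (hε : 0 ≤ ε) (hτ : 0 < τ) {W V : ℕ → ℕ → ℂ} (hW : memX J K W) (hV : memX J K V)
    (h : stepEq Δx Δy J K lam ν ε τ W V) :
    normP Δx Δy J K 2 W ≤ normP Δx Δy J K 2 V := by
  have hbalance := normP_two_add_of_stepEq Δx Δy J K lam ν ε hτ.ne' hW hV h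
  have hdamp : 0 ≤ 2 * τ * ε * normP Δx Δy J K 4 (fun j k => (W j k + V j k) / 2) :=
    mul_nonneg (by positivity) (mul_nonneg hΔ (by positivity))
  linarith

theorem stmt5_general (J K : ℕ) (a b c d : ℝ) (hab : a < b) (hcd : c < d)
    (Δx Δy : ℝ) (hΔx : Δx = (b - a) / J) (hΔy : Δy = (d - c) / K)
    (lam ν ε τ : ℝ) (hε : 0 ≤ ε) (hτ : 0 < τ)
    (N : ℕ) (U : ℕ → ℕ → ℕ → ℂ) (hU : isCNFD Δx Δy J K lam ν ε τ N U)
    (n : ℕ) (hn' : n ≤ N) :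
    normP Δx Δy J K 2 (U n) ≤ normP Δx Δy J K 2 (U 0) := by
  obtain ⟨hmem, hstep⟩ := hU
  have hΔ : 0 ≤ Δx * Δy := by
    rw [hΔx, hΔy]
    exact mul_nonneg (div_nonneg (sub_pos.2 hab).le J.cast_nonneg)
      (div_nonneg (sub_pos.2 hcd).le K.cast_nonneg)
  induction n with
  | zero => exact le_rfl
  | succ m ih =>
    exact (normP_two_le_of_stepEq hΔ J K lam ν hε hτ (hmem _ hn') (hmem m (by omega))
      (hstep m hn')).trans (ih (by omega))

/-- boundedness of the discrete solution in the discrete L²-norm. -/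
theorem stmt5 (J K : ℕ) (hJ : 2 ≤ J) (hK : 2 ≤ K) (a b c d : ℝ) (hab : a < b) (hcd : c < d)
    (Δx Δy : ℝ) (hΔx : Δx = (b - a) / J) (hΔy : Δy = (d - c) / K)
    (lam ν ε τ : ℝ) (hν : 0 < ν) (hε : 0 ≤ ε) (hτ : 0 < τ)
    (N : ℕ) (U : ℕ → ℕ → ℕ → ℂ) (hU : isCNFD Δx Δy J K lam ν ε τ N U)
    (n : ℕ) (hn : 1 ≤ n) (hn' : n ≤ N) :
    normP Δx Δy J K 2 (U n) ≤ normP Δx Δy J K 2 (U 0) :=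
  stmt5_general J K a b c d hab hcd Δx Δy hΔx hΔy lam ν ε τ hε hτ N U hU n hn'
end
end

section
/- Let {Uⁿ}_{n=0}^N be a CNFD solution and 0 ≤ n ≤ N−1. Then the discrete energy satisfies the exact identity E_h(U^{n+1}) − E_h(Uⁿ) = 2ε · Im(⟨U^{n+1}, Uⁿ·|U^{n+1/2}|²⟩_h), where ⟨U^{n+1}, Uⁿ·|U^{n+1/2}|²⟩_h = ΔxΔy Σ_{j=1}^{J−1} Σ_{k=1}^{K−1} U^{n+1}_{j,k} · conj(Uⁿ_{j,k}) · |U^{n+1/2}_{j,k}|². -/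
noncomputable section

open Finset Complex ComplexConjugate

/-!
Pair the scheme at every interior node with `conj (U^{n+1} - Uⁿ)` and take real parts. The
time-difference term is purely imaginary; summation by parts (the arrays vanish on the boundary)
turns the pairing with `δ² U^{n+1/2}` into minus half the change of `‖δ⁺U‖²_{2,h}`; and `ψ₁`, `ψ₂`
are built so that `Re (ψ (z, w) · conj (z - w))` telescopes to `(|z|⁴ - |w|⁴)/4`, resp.
`(|z|⁶ - |w|⁶)/6`. Only the damping term survives, and it gives the right-hand side.
-/

lemma sum_Icc_one_pred_eq_sum_range {M : Type*} [AddCommMonoid M] (f : ℕ → M) (m : ℕ)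
    (h0 : f 0 = 0) : ∑ j ∈ Icc 1 (m - 1), f j = ∑ j ∈ range m, f j := by
  cases m with
  | zero => simp
  | succ m =>
    rw [range_eq_Ico, sum_eq_sum_Ico_succ_bot (Nat.succ_pos m), h0, zero_add, Nat.add_sub_cancel,
      ← Ico_add_one_right_eq_Icc]
    rfl

lemma sum_Icc_sum_Icc_eq_sum_range_sum_range {M : Type*} [AddCommMonoid M] (f : ℕ → ℕ → M)
    (J K : ℕ) (h0 : ∀ k, f 0 k = 0) (h0' : ∀ j, f j 0 = 0) :
    ∑ j ∈ Icc 1 (J - 1), ∑ k ∈ Icc 1 (K - 1), f j k = ∑ j ∈ range J, ∑ k ∈ range K, f j k := by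
  rw [sum_Icc_one_pred_eq_sum_range _ _ (by simp [h0])]
  exact sum_congr rfl fun j _ => sum_Icc_one_pred_eq_sum_range _ _ (h0' j)

lemma sum_Ico_secondDiff_mul {R : Type*} [CommRing R] (u w : ℕ → R) (m : ℕ) :
    ∑ j ∈ Ico 1 (m + 1), (u (j + 1) - 2 * u j + u (j - 1)) * w j =
      (u (m + 1) - u m) * w (m + 1) - (u 1 - u 0) * w 0 -
        ∑ j ∈ range (m + 1), (u (j + 1) - u j) * (w (j + 1) - w j) := by
  induction m with
  | zero => simp only [Ico_self, sum_empty, zero_add, sum_range_one]; ring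
  | succ m ih =>
    rw [sum_Ico_succ_top (by omega), sum_range_succ, ih, Nat.add_sub_cancel]
    ring

lemma sum_secondDiff_mul_eq_neg_sum_diff_mul_diff {R : Type*} [CommRing R] (u w : ℕ → R)
    {m : ℕ} (h0 : w 0 = 0) (hm : w m = 0) :
    ∑ j ∈ Icc 1 (m - 1), (u (j + 1) - 2 * u j + u (j - 1)) * w j =
      -∑ j ∈ range m, (u (j + 1) - u j) * (w (j + 1) - w j) := by
  cases m with
  | zero => simp
  | succ m =>
    rw [Nat.add_sub_cancel, ← Ico_add_one_right_eq_Icc, sum_Ico_secondDiff_mul, h0, hm]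
    ring

lemma re_I_mul_div_mul_conj (z : ℂ) (t : ℝ) : (I * z / t * conj z).re = 0 := by
  rw [show I * z / t * conj z = I * (z * conj z) / t by ring, mul_conj]
  simp [div_re]

lemma re_midpoint_mul_conj_sub (p q : ℂ) :
    ((p + q) / 2 * conj (p - q)).re = (‖p‖ ^ 2 - ‖q‖ ^ 2) / 2 := by
  rw [Complex.sq_norm, Complex.sq_norm]
  simp only [map_sub, mul_re, div_ofNat_re, div_ofNat_im, add_re, add_im, sub_re, sub_im, conj_re,
    conj_im, normSq_apply]
  ring

lemma re_psi1_mul_conj_sub (z w : ℂ) :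
    (psi1 z w * conj (z - w)).re = (‖z‖ ^ 4 - ‖w‖ ^ 4) / 4 := by
  rw [psi1, mul_assoc, re_ofReal_mul, re_midpoint_mul_conj_sub]
  ring

lemma re_psi2_mul_conj_sub (z w : ℂ) :
    (psi2 z w * conj (z - w)).re = (‖z‖ ^ 6 - ‖w‖ ^ 6) / 6 := by
  rw [psi2, mul_assoc, re_ofReal_mul, re_midpoint_mul_conj_sub]
  ring

lemma re_I_mul_phi_mul_conj_sub (z w : ℂ) :
    (I * phi z w * conj (z - w)).re = (z * conj w * (‖(z + w) / 2‖ ^ 2 : ℝ)).im := by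
  simp only [phi]
  generalize ‖(z + w) / 2‖ ^ 2 = m
  simp only [map_sub, mul_re, mul_im, I_re, I_im, ofReal_re, ofReal_im, div_ofNat_re, div_ofNat_im,
    add_re, add_im, sub_re, sub_im, conj_re, conj_im]
  ring

lemma re_stepEq_lhs_mul_conj_sub (z w L : ℂ) (lam ν ε τ : ℝ) :
    ((I * (z - w) / τ + L + lam * psi1 z w - ν * psi2 z w + I * ε * phi z w) * conj (z - w)).re =
      (L * conj (z - w)).re + lam * (‖z‖ ^ 4 - ‖w‖ ^ 4) / 4 - ν * (‖z‖ ^ 6 - ‖w‖ ^ 6) / 6 +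
        ε * (z * conj w * (‖(z + w) / 2‖ ^ 2 : ℝ)).im := by
  have hφ : I * ε * phi z w * conj (z - w) = ε * (I * phi z w * conj (z - w)) := by ring
  simp only [add_mul, sub_mul, add_re, sub_re, mul_assoc (lam : ℂ), mul_assoc (ν : ℂ), hφ,
    re_ofReal_mul, re_I_mul_div_mul_conj, re_psi1_mul_conj_sub, re_psi2_mul_conj_sub,
    re_I_mul_phi_mul_conj_sub]
  ring

lemma re_sum_secondDiff_midpoint_mul_conj_sub (w v : ℕ → ℂ) {m : ℕ}
    (hw0 : w 0 = 0) (hwm : w m = 0) (hv0 : v 0 = 0) (hvm : v m = 0) :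
    (∑ j ∈ Icc 1 (m - 1), ((w (j + 1) + v (j + 1)) / 2 - 2 * ((w j + v j) / 2) +
        (w (j - 1) + v (j - 1)) / 2) * conj (w j - v j)).re =
      -(∑ j ∈ range m, (‖w (j + 1) - w j‖ ^ 2 - ‖v (j + 1) - v j‖ ^ 2)) / 2 := by
  rw [sum_secondDiff_mul_eq_neg_sum_diff_mul_diff (fun j => (w j + v j) / 2)
    (fun j => conj (w j - v j)) (by simp [hw0, hv0]) (by simp [hwm, hvm])]
  simp only [neg_re, re_sum, neg_div, sum_div]
  congr 1
  refine sum_congr rfl fun j _ => ?_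
  rw [← re_midpoint_mul_conj_sub, ← map_sub]
  ring_nf

section Laplacian

variable {J K : ℕ} {W V : ℕ → ℕ → ℂ}

lemma re_sum_secondDiff_snd (hW : memX J K W) (hV : memX J K V) :
    (∑ j ∈ Icc 1 (J - 1), ∑ k ∈ Icc 1 (K - 1),
      ((W j (k + 1) + V j (k + 1)) / 2 - 2 * ((W j k + V j k) / 2) +
        (W j (k - 1) + V j (k - 1)) / 2) * conj (W j k - V j k)).re =
      -(∑ j ∈ range J, ∑ k ∈ range K,
        (‖W j (k + 1) - W j k‖ ^ 2 - ‖V j (k + 1) - V j k‖ ^ 2)) / 2 := by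
  obtain ⟨hW0, -, hW0', hWK⟩ := hW
  obtain ⟨hV0, -, hV0', hVK⟩ := hV
  rw [re_sum, ← sum_Icc_one_pred_eq_sum_range _ _ (by simp [hW0, hV0]), ← sum_neg_distrib,
    sum_div]
  exact sum_congr rfl fun j _ =>
    re_sum_secondDiff_midpoint_mul_conj_sub _ _ (hW0' j) (hWK j) (hV0' j) (hVK j)

lemma memX_transpose (hW : memX J K W) : memX K J (fun k j => W j k) :=
  ⟨hW.2.2.1, hW.2.2.2, hW.1, hW.2.1⟩

lemma re_sum_secondDiff_fst (hW : memX J K W) (hV : memX J K V) :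
    (∑ j ∈ Icc 1 (J - 1), ∑ k ∈ Icc 1 (K - 1),
      ((W (j + 1) k + V (j + 1) k) / 2 - 2 * ((W j k + V j k) / 2) +
        (W (j - 1) k + V (j - 1) k) / 2) * conj (W j k - V j k)).re =
      -(∑ j ∈ range J, ∑ k ∈ range K,
        (‖W (j + 1) k - W j k‖ ^ 2 - ‖V (j + 1) k - V j k‖ ^ 2)) / 2 := by
  rw [sum_comm, re_sum_secondDiff_snd (memX_transpose hW) (memX_transpose hV), sum_comm]

lemma re_sum_delta2_midpoint_mul_conj_sub (Δx Δy : ℝ) (hW : memX J K W) (hV : memX J K V) :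
    Δx * Δy * (∑ j ∈ Icc 1 (J - 1), ∑ k ∈ Icc 1 (K - 1),
      delta2 Δx Δy (fun j k => (W j k + V j k) / 2) j k * conj (W j k - V j k)).re =
      -(gradSq Δx Δy J K W - gradSq Δx Δy J K V) / 2 := by
  have hsplit : ∑ j ∈ Icc 1 (J - 1), ∑ k ∈ Icc 1 (K - 1),
      delta2 Δx Δy (fun j k => (W j k + V j k) / 2) j k * conj (W j k - V j k) =
      ((Δx ^ 2)⁻¹ : ℝ) * ∑ j ∈ Icc 1 (J - 1), ∑ k ∈ Icc 1 (K - 1),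
        ((W (j + 1) k + V (j + 1) k) / 2 - 2 * ((W j k + V j k) / 2) +
          (W (j - 1) k + V (j - 1) k) / 2) * conj (W j k - V j k) +
      ((Δy ^ 2)⁻¹ : ℝ) * ∑ j ∈ Icc 1 (J - 1), ∑ k ∈ Icc 1 (K - 1),
        ((W j (k + 1) + V j (k + 1)) / 2 - 2 * ((W j k + V j k) / 2) +
          (W j (k - 1) + V j (k - 1)) / 2) * conj (W j k - V j k) := by
    simp only [mul_sum, ← sum_add_distrib, delta2]
    refine sum_congr rfl fun j _ => sum_congr rfl fun k _ => ?_
    push_cast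
    ring
  have hgrad : ∀ u : ℕ → ℕ → ℂ, gradSq Δx Δy J K u = Δx * Δy *
      ((Δx ^ 2)⁻¹ * ∑ j ∈ range J, ∑ k ∈ range K, ‖u (j + 1) k - u j k‖ ^ 2 +
        (Δy ^ 2)⁻¹ * ∑ j ∈ range J, ∑ k ∈ range K, ‖u j (k + 1) - u j k‖ ^ 2) := fun u => by
    simp only [gradSq, norm_div, norm_real, Real.norm_eq_abs, div_pow, sq_abs]
    simp only [mul_sum, ← sum_add_distrib, div_eq_inv_mul]
  rw [hsplit, add_re, re_ofReal_mul, re_ofReal_mul, re_sum_secondDiff_fst hW hV,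
    re_sum_secondDiff_snd hW hV, hgrad, hgrad]
  simp only [sum_sub_distrib]
  ring

end Laplacian

lemma normP_eq_sum_interior {J K : ℕ} {u : ℕ → ℕ → ℂ} (hu : memX J K u) (Δx Δy : ℝ) {p : ℕ}
    (hp : p ≠ 0) :
    normP Δx Δy J K p u = Δx * Δy * ∑ j ∈ Icc 1 (J - 1), ∑ k ∈ Icc 1 (K - 1), ‖u j k‖ ^ p := by
  rw [normP, sum_Icc_sum_Icc_eq_sum_range_sum_range _ J K (by simp [hu.1, hp])
    (by simp [hu.2.2.1, hp])]

theorem energy_sub_energy_of_stepEq {J K : ℕ} {Δx Δy lam ν ε τ : ℝ} {W V : ℕ → ℕ → ℂ}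
    (hW : memX J K W) (hV : memX J K V) (hstep : stepEq Δx Δy J K lam ν ε τ W V) :
    energy Δx Δy J K lam ν W - energy Δx Δy J K lam ν V =
      2 * ε * (((Δx * Δy : ℝ) : ℂ) * ∑ j ∈ Icc 1 (J - 1), ∑ k ∈ Icc 1 (K - 1),
        W j k * conj (V j k) * ((‖(W j k + V j k) / 2‖ ^ 2 : ℝ) : ℂ)).im := by
  have hpairing : ∑ j ∈ Icc 1 (J - 1), ∑ k ∈ Icc 1 (K - 1),
      ((delta2 Δx Δy (fun j k => (W j k + V j k) / 2) j k * conj (W j k - V j k)).re +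
        lam * (‖W j k‖ ^ 4 - ‖V j k‖ ^ 4) / 4 - ν * (‖W j k‖ ^ 6 - ‖V j k‖ ^ 6) / 6 +
        ε * (W j k * conj (V j k) * ((‖(W j k + V j k) / 2‖ ^ 2 : ℝ) : ℂ)).im) = 0 := by
    refine sum_eq_zero fun j hj => sum_eq_zero fun k hk => ?_
    rw [mem_Icc] at hj hk
    rw [← re_stepEq_lhs_mul_conj_sub, hstep j k hj.1 hj.2 hk.1 hk.2, zero_mul, zero_re]
  simp only [sum_add_distrib, sum_sub_distrib, ← sum_div, ← mul_sum, ← re_sum] at hpairing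
  have hlap := re_sum_delta2_midpoint_mul_conj_sub Δx Δy hW hV
  simp only [energy, normP_eq_sum_interior hW Δx Δy (show 4 ≠ 0 by norm_num),
    normP_eq_sum_interior hV Δx Δy (show 4 ≠ 0 by norm_num),
    normP_eq_sum_interior hW Δx Δy (show 6 ≠ 0 by norm_num),
    normP_eq_sum_interior hV Δx Δy (show 6 ≠ 0 by norm_num), im_ofReal_mul, im_sum]
  linear_combination (-2 * Δx * Δy) * hpairing + 2 * hlap

theorem stmt8_general (J K : ℕ) (Δx Δy : ℝ) (lam ν ε τ : ℝ)
    (N : ℕ) (U : ℕ → ℕ → ℕ → ℂ) (hU : isCNFD Δx Δy J K lam ν ε τ N U)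
    (n : ℕ) (hn : n < N) :
    energy Δx Δy J K lam ν (U (n + 1)) - energy Δx Δy J K lam ν (U n) =
      2 * ε * (((Δx * Δy : ℝ) : ℂ) * ∑ j ∈ Finset.Icc 1 (J - 1), ∑ k ∈ Finset.Icc 1 (K - 1),
          U (n + 1) j k * conj (U n j k) *
            ((‖(U (n + 1) j k + U n j k) / 2‖ ^ 2 : ℝ) : ℂ)).im :=
  energy_sub_energy_of_stepEq (hU.1 (n + 1) hn) (hU.1 n hn.le) (hU.2 n hn)

/-- exact discrete energy balance identity. -/
theorem stmt8 (J K : ℕ) (hJ : 2 ≤ J) (hK : 2 ≤ K) (a b c d : ℝ) (hab : a < b) (hcd : c < d)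
    (Δx Δy : ℝ) (hΔx : Δx = (b - a) / J) (hΔy : Δy = (d - c) / K)
    (lam ν ε τ : ℝ) (hν : 0 < ν) (hε : 0 ≤ ε) (hτ : 0 < τ)
    (N : ℕ) (U : ℕ → ℕ → ℕ → ℂ) (hU : isCNFD Δx Δy J K lam ν ε τ N U)
    (n : ℕ) (hn : n < N) :
    energy Δx Δy J K lam ν (U (n + 1)) - energy Δx Δy J K lam ν (U n) =
      2 * ε * (((Δx * Δy : ℝ) : ℂ) * ∑ j ∈ Finset.Icc 1 (J - 1), ∑ k ∈ Finset.Icc 1 (K - 1),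
          U (n + 1) j k * conj (U n j k) *
            ((‖(U (n + 1) j k + U n j k) / 2‖ ^ 2 : ℝ) : ℂ)).im :=
  stmt8_general J K Δx Δy lam ν ε τ N U hU n hn
end
end
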